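/- arXiv:2207.07294 — 2 statements merged into one kernel-verified Lean document; each statement's English description precedes it below -/
import Mathlib

section
/- Let G be a graph, A ∈ S(G), B ∈ S(complement of G) with AB = O, and let i ≠ j be vertices such that N_G(i) \ N_G[j] = {v} for some vertex v. If i is adjacent to j in G, then b_jj ≠ 0 and a_jj = 0; if i is not adjacent to j in G, then a_ii ≠ 0 and b_ii = 0. -/
/-
Expand the entry `(AB)_{ij} = ∑ₖ a_ik b_kj`. A term with `k ∉ {i, j}` can only be nonzero when
`k ~ i` in `G` and `k ≁ j` in `G`, i.e. when `k ∈ N_G(i) \ N_G[j]`; so `0 = (AB)_{ij}` has exactly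
three terms `a_ii b_ij + a_ij b_jj + a_iv b_vj`, the last one nonzero. If `i ~ j` then `b_ij = 0`,
forcing `a_ij b_jj ≠ 0`; if `i ≁ j` then `a_ij = 0`, forcing `a_ii b_ij ≠ 0`. The same expansion
for `i = j` gives `a_xx b_xx = 0`, which yields the second half of each conclusion.
-/

/-- `A ∈ S(G)`: real symmetric matrix whose off-diagonal nonzero pattern is `E(G)`. -/
def MatIn {V : Type*} [Fintype V] (G : SimpleGraph V) (A : Matrix V V ℝ) : Prop :=
  A.IsSymm ∧ ∀ i j : V, i ≠ j → (A i j ≠ 0 ↔ G.Adj i j)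

/-- `G` is complementary vanishing. -/
def CompVan {V : Type*} [Fintype V] (G : SimpleGraph V) : Prop :=
  ∃ A B : Matrix V V ℝ, MatIn G A ∧ MatIn Gᶜ B ∧ A * B = 0

namespace MatIn

variable {V : Type*} [Fintype V] {G : SimpleGraph V} {A B : Matrix V V ℝ} {i j k v : V}

theorem apply_ne_zero (hA : MatIn G A) (h : G.Adj i j) : A i j ≠ 0 :=
  (hA.2 i j h.ne).mpr h

theorem apply_eq_zero (hA : MatIn G A) (hij : i ≠ j) (h : ¬G.Adj i j) : A i j = 0 :=
  not_not.mp fun hne => h ((hA.2 i j hij).mp hne)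

theorem compl_apply_eq_zero (hB : MatIn Gᶜ B) (h : G.Adj i j) : B i j = 0 :=
  hB.apply_eq_zero h.ne fun hc => ((SimpleGraph.compl_adj G i j).mp hc).2 h

theorem mul_term_eq_zero (hA : MatIn G A) (hB : MatIn Gᶜ B) (hki : k ≠ i)
    (h : G.Adj i k → G.Adj k j) : A i k * B k j = 0 := by
  by_cases hik : G.Adj i k
  · rw [hB.compl_apply_eq_zero (h hik), mul_zero]
  · rw [hA.apply_eq_zero hki.symm hik, zero_mul]

theorem diag_mul_diag_eq_zero (hA : MatIn G A) (hB : MatIn Gᶜ B) (hAB : A * B = 0) (x : V) :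
    A x x * B x x = 0 := by
  rw [← Finset.sum_eq_single_of_mem x (Finset.mem_univ x)
      fun k _ hk => hA.mul_term_eq_zero hB hk fun h => h.symm,
    ← Matrix.mul_apply, hAB, Matrix.zero_apply]

theorem mul_term_ne_zero_of_mem_sdiff (hA : MatIn G A) (hB : MatIn Gᶜ B)
    (hv : v ∈ G.neighborSet i \ insert j (G.neighborSet j)) : A i v * B v j ≠ 0 := by
  obtain ⟨hiv, hvj⟩ := hv
  simp only [Set.mem_insert_iff, SimpleGraph.mem_neighborSet, not_or] at hiv hvj
  refine mul_ne_zero (hA.apply_ne_zero hiv) ((hB.2 v j hvj.1).mpr ?_)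
  exact (SimpleGraph.compl_adj G v j).mpr ⟨hvj.1, fun h => hvj.2 h.symm⟩

theorem mul_apply_eq_of_sdiff_eq_singleton (hA : MatIn G A) (hB : MatIn Gᶜ B) (hij : i ≠ j)
    (hdiff : G.neighborSet i \ insert j (G.neighborSet j) = {v}) :
    (A * B) i j = A i i * B i j + A i j * B j j + A i v * B v j := by
  classical
  have hv : v ∈ G.neighborSet i \ insert j (G.neighborSet j) := hdiff ▸ rfl
  have hvi : v ≠ i := (G.ne_of_adj hv.1).symm
  have hvj : v ≠ j := fun h => hv.2 (Or.inl h)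
  have hvanish : ∀ k ∈ Finset.univ, k ∉ ({i, j, v} : Finset V) → A i k * B k j = 0 := by
    intro k _ hk
    simp only [Finset.mem_insert, Finset.mem_singleton, not_or] at hk
    refine hA.mul_term_eq_zero hB hk.1 fun hik => ?_
    have hk_not_mem : k ∉ G.neighborSet i \ insert j (G.neighborSet j) := by
      rw [hdiff]; exact hk.2.2
    have hk_mem : k ∈ insert j (G.neighborSet j) := by
      by_contra h; exact hk_not_mem ⟨hik, h⟩
    exact (hk_mem.resolve_left hk.2.1).symm
  rw [Matrix.mul_apply, ← Finset.sum_subset (Finset.subset_univ _) hvanish,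
    Finset.sum_insert (by simp [hij, hvi.symm]), Finset.sum_insert (by simp [hvj.symm]),
    Finset.sum_singleton, add_assoc]

end MatIn

theorem stmt_3 {n : ℕ} (G : SimpleGraph (Fin n)) (A B : Matrix (Fin n) (Fin n) ℝ)
    (hA : MatIn G A) (hB : MatIn Gᶜ B) (hAB : A * B = 0) (i j v : Fin n) (hij : i ≠ j)
    (hdiff : G.neighborSet i \ insert j (G.neighborSet j) = {v}) :
    (G.Adj i j → B j j ≠ 0 ∧ A j j = 0) ∧ (¬G.Adj i j → A i i ≠ 0 ∧ B i i = 0) := by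
  have hsum : A i i * B i j + A i j * B j j + A i v * B v j = 0 := by
    rw [← hA.mul_apply_eq_of_sdiff_eq_singleton hB hij hdiff, hAB, Matrix.zero_apply]
  have hv : A i v * B v j ≠ 0 :=
    hA.mul_term_ne_zero_of_mem_sdiff hB (hdiff ▸ rfl)
  constructor
  · intro hadj
    have hBjj : B j j ≠ 0 := fun h => hv <| by
      rwa [hB.compl_apply_eq_zero hadj, h, mul_zero, mul_zero, zero_add, zero_add] at hsum
    exact ⟨hBjj, (mul_eq_zero.mp (hA.diag_mul_diag_eq_zero hB hAB j)).resolve_right hBjj⟩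
  · intro hnadj
    have hAii : A i i ≠ 0 := fun h => hv <| by
      rwa [hA.apply_eq_zero hij hnadj, h, zero_mul, zero_mul, zero_add, zero_add] at hsum
    exact ⟨hAii, (mul_eq_zero.mp (hA.diag_mul_diag_eq_zero hB hAB i)).resolve_left hAii⟩
end

section
/- Let G be a complementary vanishing graph. If G has no dominating vertex, then G is α-robust; if G has no isolated vertex, then G is β-robust. -/
/-- `G` is α-robust. -/
def AlphaRobust {V : Type*} [Fintype V] (G : SimpleGraph V) : Prop :=
  ∃ A B : Matrix V V ℝ, MatIn G A ∧ MatIn Gᶜ B ∧ A * B = 0 ∧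
    ∃ x : V → ℝ, A.mulVec x = 0 ∧ ∀ i, x i ≠ 0

/-- `G` is β-robust. -/
def BetaRobust {V : Type*} [Fintype V] (G : SimpleGraph V) : Prop :=
  ∃ A B : Matrix V V ℝ, MatIn G A ∧ MatIn Gᶜ B ∧ A * B = 0 ∧
    ∃ x : V → ℝ, B.mulVec x = 0 ∧ ∀ i, x i ≠ 0

/-!
If `A * B = 0`, then `A *ᵥ (B *ᵥ y) = 0` for every `y`, so it suffices to find `y` with
`B *ᵥ y` nowhere zero. When `G` has no dominating vertex, every row of `B ∈ S(Gᶜ)` has a nonzero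
off-diagonal entry, so each set `{y | (B *ᵥ y) i = 0}` is a proper subspace of `ℝⁿ`; a vector
space over an infinite field is not a finite union of proper subspaces, which gives `y`.
For β-robustness swap the roles of `A` and `B`, using `B * A = (A * B)ᵀ = 0` and that the rows of
`A ∈ S(G)` are nonzero when `G` has no isolated vertex.
-/

open Matrix

theorem LinearMap.exists_forall_apply_ne_zero {K E ι : Type*} [DivisionRing K] [Infinite K]
    [AddCommGroup E] [Module K E] [Finite ι] (f : ι → E →ₗ[K] K) (hf : ∀ i, f i ≠ 0) :
    ∃ x, ∀ i, f i x ≠ 0 := by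
  by_contra! h
  obtain ⟨i, hi⟩ := Subspace.exists_eq_top_of_iUnion_eq_univ (p := fun i ↦ LinearMap.ker (f i))
    (Set.eq_univ_of_forall fun x ↦ by simpa using h x)
  exact hf i (LinearMap.ker_eq_top.mp hi)

namespace Matrix

variable {K l m n : Type*} [Field K] [Infinite K]

theorem exists_forall_mulVec_ne_zero [Finite m] [Fintype n] (M : Matrix m n K)
    (hM : ∀ i, ∃ j, M i j ≠ 0) : ∃ x, ∀ i, (M *ᵥ x) i ≠ 0 := by
  classical
  refine LinearMap.exists_forall_apply_ne_zero (fun i ↦ (LinearMap.proj i).comp M.mulVecLin)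
    fun i hi ↦ ?_
  obtain ⟨j, hj⟩ := hM i
  exact hj (by simpa [mulVec_single] using LinearMap.congr_fun hi (Pi.single j 1))

theorem exists_forall_ne_zero_mulVec_eq_zero_of_mul_eq_zero [Fintype m] [Fintype n]
    {A : Matrix l m K} {B : Matrix m n K} (hAB : A * B = 0) (hB : ∀ i, ∃ j, B i j ≠ 0) :
    ∃ x, A *ᵥ x = 0 ∧ ∀ i, x i ≠ 0 := by
  obtain ⟨y, hy⟩ := B.exists_forall_mulVec_ne_zero hB
  exact ⟨B *ᵥ y, by rw [mulVec_mulVec, hAB, zero_mulVec], hy⟩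

theorem IsSymm.mul_eq_zero_comm {R : Type*} [CommSemiring R] [Fintype m] {A B : Matrix m m R}
    (hA : A.IsSymm) (hB : B.IsSymm) (hAB : A * B = 0) : B * A = 0 := by
  rw [← hA.eq, ← hB.eq, ← transpose_mul, hAB, transpose_zero]

end Matrix

section

variable {V : Type*} [Fintype V] {G : SimpleGraph V} {A : Matrix V V ℝ}

theorem MatIn.ne_zero_of_adj (hA : MatIn G A) {i j : V} (h : G.Adj i j) : A i j ≠ 0 :=
  (hA.2 i j h.ne).mpr h

theorem CompVan.alphaRobust (h : CompVan G) (hG : ∀ v, ∃ u, Gᶜ.Adj v u) : AlphaRobust G := by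
  obtain ⟨A, B, hA, hB, hAB⟩ := h
  obtain ⟨x, hx⟩ := exists_forall_ne_zero_mulVec_eq_zero_of_mul_eq_zero hAB fun v ↦
    (hG v).imp fun _ ↦ hB.ne_zero_of_adj
  exact ⟨A, B, hA, hB, hAB, x, hx⟩

theorem CompVan.betaRobust (h : CompVan G) (hG : ∀ v, ∃ u, G.Adj v u) : BetaRobust G := by
  obtain ⟨A, B, hA, hB, hAB⟩ := h
  obtain ⟨x, hx⟩ := exists_forall_ne_zero_mulVec_eq_zero_of_mul_eq_zero
    (hA.1.mul_eq_zero_comm hB.1 hAB) fun v ↦ (hG v).imp fun _ ↦ hA.ne_zero_of_adj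
  exact ⟨A, B, hA, hB, hAB, x, hx⟩

end

theorem stmt_14 {n : ℕ} (G : SimpleGraph (Fin n)) (h : CompVan G) :
    ((¬ ∃ v : Fin n, ∀ u, u ≠ v → G.Adj v u) → AlphaRobust G) ∧
    ((¬ ∃ v : Fin n, ∀ u, ¬ G.Adj v u) → BetaRobust G) := by
  refine ⟨fun hdom ↦ h.alphaRobust fun v ↦ ?_, fun hiso ↦ h.betaRobust ?_⟩
  · push Not at hdom
    obtain ⟨u, hne, hnadj⟩ := hdom v
    exact ⟨u, (G.compl_adj v u).mpr ⟨hne.symm, hnadj⟩⟩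
  · push Not at hiso
    exact hiso
end
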